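/- Let A be a quasi-hereditary algebra and ℱ(Δ) the category of Δ-good modules with its preinjective partition {I_j(Δ)}. If M is an indecomposable module in I_∞(Δ), then there exists a characteristic module T ∈ I_0(Δ) with rad_Δ^∞(M, T) ≠ 0. -/

import Mathlib

open CategoryTheory

variable {A : Type} [Ring A]

def Indec (X : ModuleCat.{0} A) : Prop :=
  (¬ Subsingleton X) ∧ ∀ e : X ⟶ X, e ≫ e = e → e = 0 ∨ e = 𝟙 X

def Summand (D M : ModuleCat.{0} A) : Prop :=
  ∃ (i : D ⟶ M) (r : M ⟶ D), i ≫ r = 𝟙 D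

inductive InAdd (C : Set (ModuleCat.{0} A)) : ModuleCat.{0} A → Prop
  | base : ∀ {M}, M ∈ C → InAdd C M
  | prod : ∀ {M N : ModuleCat.{0} A}, InAdd C M → InAdd C N →
      InAdd C (ModuleCat.of A (M × N))
  | summand : ∀ {D M}, InAdd C M → Summand D M → InAdd C D

def relRad (C : Set (ModuleCat.{0} A)) (M N : ModuleCat.{0} A) : Set (M ⟶ N) :=
  {f | ∀ X : ModuleCat.{0} A, InAdd C X → Indec X →
    ∀ (g : X ⟶ M) (h : N ⟶ X), ¬ IsIso (g ≫ f ≫ h)}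

def radPow (C : Set (ModuleCat.{0} A)) : ℕ → ∀ M N : ModuleCat.{0} A, AddSubgroup (M ⟶ N)
  | 0, _, _ => ⊤
  | m+1, M, N => AddSubgroup.closure
      {f | ∃ (L : ModuleCat.{0} A) (g : M ⟶ L) (h : L ⟶ N),
        g ∈ radPow C m M L ∧ h ∈ relRad C L N ∧ f = g ≫ h}

def radInf (C : Set (ModuleCat.{0} A)) (M N : ModuleCat.{0} A) : AddSubgroup (M ⟶ N) :=
  ⨅ n : ℕ, radPow C (n+1) M N

def SplitProjIn (C : Set (ModuleCat.{0} A)) (N : ModuleCat.{0} A) : Prop :=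
  ∀ M : ModuleCat.{0} A, InAdd C M → ∀ f : M ⟶ N, Epi f → ∃ s : N ⟶ M, s ≫ f = 𝟙 N

def SplitInjIn (C : Set (ModuleCat.{0} A)) (N : ModuleCat.{0} A) : Prop :=
  ∀ M : ModuleCat.{0} A, InAdd C M → ∀ f : N ⟶ M, Mono f → ∃ r : M ⟶ N, f ≫ r = 𝟙 N

def P0set (C : Set (ModuleCat.{0} A)) : Set (ModuleCat.{0} A) :=
  {N | N ∈ C ∧ Indec N ∧ SplitProjIn C N}

def I0set (C : Set (ModuleCat.{0} A)) : Set (ModuleCat.{0} A) :=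
  {N | N ∈ C ∧ Indec N ∧ SplitInjIn C N}

def pRest (C : Set (ModuleCat.{0} A)) : ℕ → Set (ModuleCat.{0} A)
  | 0 => C
  | k+1 => {M | M ∈ pRest C k ∧ ∀ D ∈ P0set (pRest C k), ¬ Summand D M}

def iRest (C : Set (ModuleCat.{0} A)) : ℕ → Set (ModuleCat.{0} A)
  | 0 => C
  | k+1 => {M | M ∈ iRest C k ∧ ∀ D ∈ I0set (iRest C k), ¬ Summand D M}

def Ppart (C : Set (ModuleCat.{0} A)) (k : ℕ) : Set (ModuleCat.{0} A) := P0set (pRest C k)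

def Ipart (C : Set (ModuleCat.{0} A)) (k : ℕ) : Set (ModuleCat.{0} A) := I0set (iRest C k)

def Pinf (C : Set (ModuleCat.{0} A)) : Set (ModuleCat.{0} A) :=
  {M | M ∈ C ∧ Indec M ∧ ∀ k, M ∉ Ppart C k}

def Iinf (C : Set (ModuleCat.{0} A)) : Set (ModuleCat.{0} A) :=
  {M | M ∈ C ∧ Indec M ∧ ∀ k, M ∉ Ipart C k}

def IsCover (D C : Set (ModuleCat.{0} A)) : Prop :=
  ∀ X ∈ C, ∃ Y : ModuleCat.{0} A, InAdd D Y ∧ ∃ f : Y ⟶ X, Epi f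

def IsCocover (D C : Set (ModuleCat.{0} A)) : Prop :=
  ∀ X ∈ C, ∃ Y : ModuleCat.{0} A, InAdd D Y ∧ ∃ f : X ⟶ Y, Mono f

def Resolving (C : Set (ModuleCat.{0} A)) : Prop :=
  (∀ P : ModuleCat.{0} A, Module.Finite A P → Projective P → Indec P → P ∈ C) ∧
  (∀ (X Y Z : ModuleCat.{0} A) (f : X ⟶ Y) (g : Y ⟶ Z), Mono f → Epi g →
      Function.Exact f g → X ∈ C → Z ∈ C → Y ∈ C) ∧
  (∀ (X Y Z : ModuleCat.{0} A) (f : X ⟶ Y) (g : Y ⟶ Z), Mono f → Epi g →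
      Function.Exact f g → Y ∈ C → Z ∈ C → X ∈ C)

def Coresolving (C : Set (ModuleCat.{0} A)) : Prop :=
  (∀ I : ModuleCat.{0} A, Module.Finite A I → Injective I → Indec I → I ∈ C) ∧
  (∀ (X Y Z : ModuleCat.{0} A) (f : X ⟶ Y) (g : Y ⟶ Z), Mono f → Epi g →
      Function.Exact f g → X ∈ C → Z ∈ C → Y ∈ C) ∧
  (∀ (X Y Z : ModuleCat.{0} A) (f : X ⟶ Y) (g : Y ⟶ Z), Mono f → Epi g →
      Function.Exact f g → X ∈ C → Y ∈ C → Z ∈ C)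

def CovariantlyFinite (C : Set (ModuleCat.{0} A)) : Prop :=
  ∀ D : ModuleCat.{0} A, Module.Finite A D → ∃ C' : ModuleCat.{0} A, InAdd C C' ∧
    ∃ f : D ⟶ C', ∀ X ∈ C, ∀ g : D ⟶ X, ∃ h : C' ⟶ X, f ≫ h = g

def ContravariantlyFinite (C : Set (ModuleCat.{0} A)) : Prop :=
  ∀ D : ModuleCat.{0} A, Module.Finite A D → ∃ C' : ModuleCat.{0} A, InAdd C C' ∧
    ∃ f : C' ⟶ D, ∀ X ∈ C, ∀ g : X ⟶ D, ∃ h : X ⟶ C', h ≫ f = g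

def FinRep (S : Set (ModuleCat.{0} A)) : Prop :=
  ∃ (ι : Type) (_ : Finite ι) (rep : ι → ModuleCat.{0} A),
    ∀ M ∈ S, ∃ i, Nonempty (M ≅ rep i)

def IsProjCover {P S : ModuleCat.{0} A} (π : P ⟶ S) : Prop :=
  Projective P ∧ Epi π ∧ ∀ (Q : ModuleCat.{0} A) (g : Q ⟶ P), Epi (g ≫ π) → Epi g

def IsInjEnv {S I : ModuleCat.{0} A} (ι : S ⟶ I) : Prop :=
  Injective I ∧ Mono ι ∧ ∀ (Q : ModuleCat.{0} A) (g : I ⟶ Q), Mono (ι ≫ g) → Mono g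

def modfg (A : Type) [Ring A] : Set (ModuleCat.{0} A) := {X | Module.Finite A X}

def HasDeltaFiltration {A : Type} [Ring A] {n : ℕ} (Δ : Fin n → ModuleCat.{0} A)
    (M : ModuleCat.{0} A) : Prop :=
  ∃ (s : ℕ) (c : Fin (s+1) → Submodule A M),
    Monotone c ∧ c 0 = ⊥ ∧ c (Fin.last s) = ⊤ ∧
    ∀ i : Fin s, ∃ j : Fin n,
      Nonempty ((↥(c i.succ) ⧸ Submodule.comap (c i.succ).subtype (c i.castSucc))
          ≃ₗ[A] ↥(Δ j))

def FDelta {A : Type} [Ring A] {n : ℕ} (Δ : Fin n → ModuleCat.{0} A) :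
    Set (ModuleCat.{0} A) :=
  {M | Module.Finite A M ∧ HasDeltaFiltration Δ M}


/-!
Since `M` lies in no `I_k(Δ)`, it survives every step of the partition, so the cocovers give
monomorphisms `M → Z_t → ⋯ → Z_0` with `Z_k ∈ add I_k(Δ)`. Every map from `add I_{k+1}(Δ)` to
`add I_k(Δ)` is radical: an indecomposable `X` through which it factored isomorphically would be a
summand of both ends, hence (Krull–Schmidt, via Fitting's lemma for finite-length modules) `X` is
isomorphic to some object of `I_k(Δ)` and a summand of an object of `I_{k+1}(Δ)`, which the
partition forbids. So `M → Z_0` is a nonzero map in `rad^t`, and one of its components `M → T`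
with `T ∈ I_0(Δ)` is nonzero. Over an Artinian base `Hom(M, T)` has finite length, so the chain
`rad^t(M, T)` stabilises at `rad^∞(M, T)`; as there are finitely many `T`, one `t` serves for all.
-/

namespace Module.End

variable {R M : Type*} [Ring R] [AddCommGroup M] [Module R M]

theorem isNilpotent_or_isUnit_of_forall_isIdempotentElem [IsArtinian R M] [IsNoetherian R M]
    (hM : ∀ e : Module.End R M, IsIdempotentElem e → e = 0 ∨ e = 1) (f : Module.End R M) :
    IsNilpotent f ∨ IsUnit f := by
  obtain ⟨n, hcompl, hn⟩ :=
    (f.eventually_isCompl_ker_pow_range_pow.and (Filter.eventually_ge_atTop 1)).exists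
  have hker := Submodule.ker_projection hcompl
  rcases hM _ (Submodule.isIdempotentElem_projection hcompl) with h | h
  · right
    have hsurj : Function.Surjective ⇑(f ^ n) := by
      rw [← LinearMap.range_eq_top, ← hker, h, LinearMap.ker_zero]
    have hunit : IsUnit (f ^ n) := (Module.End.isUnit_iff _).mpr
      ⟨IsNoetherian.injective_of_surjective_endomorphism _ hsurj, hsurj⟩
    exact (isUnit_pow_iff (by omega)).mp hunit
  · left
    refine ⟨n, LinearMap.range_eq_bot.mp ?_⟩
    rw [← hker, h]
    exact LinearMap.ker_id

theorem isLocalRing_of_forall_isIdempotentElem [IsArtinian R M] [IsNoetherian R M] [Nontrivial M]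
    (hM : ∀ e : Module.End R M, IsIdempotentElem e → e = 0 ∨ e = 1) :
    IsLocalRing (Module.End R M) :=
  .of_isUnit_or_isUnit_one_sub_self fun f =>
    (isNilpotent_or_isUnit_of_forall_isIdempotentElem hM f).elim
      (fun h => .inr h.isUnit_one_sub) .inl

end Module.End

theorem isArtinian_linearMap_of_finite (R : Type*) {S M N : Type*} [CommRing R] [Ring S]
    [Algebra R S] [AddCommGroup M] [Module S M] [Module.Finite S M] [AddCommGroup N]
    [Module S N] [Module R N] [IsScalarTower R S N] [IsArtinian R N] :
    IsArtinian R (M →ₗ[S] N) := by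
  obtain ⟨k, gen, hgen⟩ := Module.Finite.exists_fin (R := S) (M := M)
  let eval : (M →ₗ[S] N) →ₗ[R] (Fin k → N) :=
    { toFun := fun f j => f (gen j)
      map_add' := fun _ _ => rfl
      map_smul' := fun _ _ => rfl }
  exact isArtinian_of_injective eval fun f g hfg =>
    LinearMap.ext_on_range hgen (congrFun hfg)

theorem Summand.trans {X D M : ModuleCat.{0} A} (h₁ : Summand X D) (h₂ : Summand D M) :
    Summand X M := by
  obtain ⟨i₁, r₁, h₁⟩ := h₁
  obtain ⟨i₂, r₂, h₂⟩ := h₂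
  exact ⟨i₁ ≫ i₂, r₂ ≫ r₁, by simp [reassoc_of% h₂, h₁]⟩

theorem Summand.of_iso {D M : ModuleCat.{0} A} (e : D ≅ M) : Summand D M :=
  ⟨e.hom, e.inv, e.hom_inv_id⟩

theorem Summand.of_linearMap {D M : ModuleCat.{0} A} (i : D →ₗ[A] M) (r : M →ₗ[A] D)
    (h : r ∘ₗ i = LinearMap.id) : Summand D M :=
  ⟨ModuleCat.ofHom i, ModuleCat.ofHom r, by ext x; exact LinearMap.congr_fun h x⟩

theorem Summand.of_isIso_comp {X Z : ModuleCat.{0} A} (g : X ⟶ Z) (k : Z ⟶ X)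
    (h : IsIso (g ≫ k)) : Summand X Z :=
  ⟨g, k ≫ inv (g ≫ k), by rw [← Category.assoc, IsIso.hom_inv_id]⟩

theorem InAdd.finite {C : Set (ModuleCat.{0} A)} (hC : ∀ Y ∈ C, Module.Finite A Y)
    {X : ModuleCat.{0} A} (h : InAdd C X) : Module.Finite A X := by
  induction h with
  | base hM => exact hC _ hM
  | prod => exact Module.Finite.prod
  | summand _ hs =>
    obtain ⟨i, r, hir⟩ := hs
    exact Module.Finite.of_surjective r.hom fun d => ⟨i d, ConcreteCategory.congr_hom hir d⟩

theorem Indec.forall_isIdempotentElem {X : ModuleCat.{0} A} (hX : Indec X)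
    (e : Module.End A X) (he : IsIdempotentElem e) : e = 0 ∨ e = 1 := by
  rcases hX.2 (ModuleCat.ofHom e) (ModuleCat.hom_ext he) with h | h
  · exact .inl (congrArg ModuleCat.Hom.hom h)
  · exact .inr (congrArg ModuleCat.Hom.hom h)

theorem Indec.nonempty_iso_of_summand {D M : ModuleCat.{0} A} (hM : Indec M)
    (hD : ¬ Subsingleton D) (h : Summand D M) : Nonempty (D ≅ M) := by
  obtain ⟨i, r, hir⟩ := h
  rcases hM.2 (r ≫ i) (by simp [reassoc_of% hir]) with h | h
  · refine absurd (ModuleCat.isZero_iff_subsingleton.mp ?_) hD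
    rw [Limits.IsZero.iff_id_eq_zero, ← hir, ← Category.id_comp (i ≫ r), ← hir]
    simp [reassoc_of% h]
  · exact ⟨⟨i, r, hir, h⟩⟩

theorem Indec.summand_or_summand_of_summand_prod {X M N : ModuleCat.{0} A}
    [IsArtinian A X] [IsNoetherian A X] (hX : Indec X)
    (h : Summand X (ModuleCat.of A (M × N))) : Summand X M ∨ Summand X N := by
  obtain ⟨i, r, hir⟩ := h
  have : Nontrivial X := not_subsingleton_iff_nontrivial.mp hX.1
  have := Module.End.isLocalRing_of_forall_isIdempotentElem hX.forall_isIdempotentElem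
  let a : Module.End A X := r.hom ∘ₗ LinearMap.inl A M N ∘ₗ LinearMap.fst A M N ∘ₗ i.hom
  let b : Module.End A X := r.hom ∘ₗ LinearMap.inr A M N ∘ₗ LinearMap.snd A M N ∘ₗ i.hom
  have hab : a + b = 1 := by
    ext x
    simpa [a, b, ← map_add] using ConcreteCategory.congr_hom hir x
  rcases IsLocalRing.isUnit_or_isUnit_of_add_one hab with ha | hb
  · obtain ⟨a', ha'⟩ := ha.exists_left_inv
    exact .inl (.of_linearMap _ (a' ∘ₗ r.hom ∘ₗ LinearMap.inl A M N) ha')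
  · obtain ⟨b', hb'⟩ := hb.exists_left_inv
    exact .inr (.of_linearMap _ (b' ∘ₗ r.hom ∘ₗ LinearMap.inr A M N) hb')

theorem Indec.exists_summand_of_inAdd {S : Set (ModuleCat.{0} A)} {X Z : ModuleCat.{0} A}
    [IsArtinian A X] [IsNoetherian A X] (hX : Indec X) (hZ : InAdd S Z) (hs : Summand X Z) :
    ∃ W ∈ S, Summand X W := by
  induction hZ with
  | base hW => exact ⟨_, hW, hs⟩
  | prod _ _ ih₁ ih₂ => exact (hX.summand_or_summand_of_summand_prod hs).elim ih₁ ih₂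
  | summand _ hsum ih => exact ih (hs.trans hsum)

theorem comp_mem_relRad {C : Set (ModuleCat.{0} A)} {L N P : ModuleCat.{0} A} {h : L ⟶ N}
    (hh : h ∈ relRad C L N) (k : N ⟶ P) : h ≫ k ∈ relRad C L P := by
  intro X hXa hXi g h'
  simpa only [Category.assoc] using hh X hXa hXi g (k ≫ h')

theorem comp_mem_radPow_succ {C : Set (ModuleCat.{0} A)} {m : ℕ} {M L N : ModuleCat.{0} A}
    {g : M ⟶ L} {h : L ⟶ N} (hg : g ∈ radPow C m M L) (hh : h ∈ relRad C L N) :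
    g ≫ h ∈ radPow C (m + 1) M N :=
  AddSubgroup.subset_closure ⟨L, g, h, hg, hh, rfl⟩

theorem comp_mem_radPow {C : Set (ModuleCat.{0} A)} :
    ∀ {m : ℕ} {M N P : ModuleCat.{0} A} {f : M ⟶ N}, f ∈ radPow C m M N →
      ∀ k : N ⟶ P, f ≫ k ∈ radPow C m M P
  | 0, _, _, _, _, _, _ => AddSubgroup.mem_top _
  | m + 1, M, N, P, _, hf, k => by
    induction hf using AddSubgroup.closure_induction with
    | mem f hf =>
      obtain ⟨L, g, h, hg, hh, rfl⟩ := hf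
      rw [Category.assoc]
      exact comp_mem_radPow_succ hg (comp_mem_relRad hh k)
    | zero => rw [Limits.zero_comp]; exact zero_mem _
    | add _ _ _ _ hf hg => rw [Preadditive.add_comp]; exact add_mem hf hg
    | neg _ _ hf => rw [Preadditive.neg_comp]; exact neg_mem hf

theorem radPow_antitone (C : Set (ModuleCat.{0} A)) (M N : ModuleCat.{0} A) :
    Antitone fun m => radPow C m M N :=
  antitone_nat_of_succ_le fun _ => (AddSubgroup.closure_le _).mpr <| by
    rintro _ ⟨L, g, h, hg, -, rfl⟩
    exact comp_mem_radPow hg h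

theorem SplitInjIn.of_iso {C : Set (ModuleCat.{0} A)} {D M : ModuleCat.{0} A} (e : D ≅ M)
    (hD : SplitInjIn C D) : SplitInjIn C M := by
  intro Y hY f hf
  obtain ⟨r, hr⟩ := hD Y hY (e.hom ≫ f) inferInstance
  refine ⟨r ≫ e.hom, ?_⟩
  rw [← cancel_epi e.hom, ← Category.assoc, ← Category.assoc, hr]
  simp

theorem mem_iRest_of_mem_Iinf {C : Set (ModuleCat.{0} A)} {M : ModuleCat.{0} A}
    (hM : M ∈ Iinf C) : ∀ k, M ∈ iRest C k
  | 0 => hM.1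
  | k + 1 => by
    have ih := mem_iRest_of_mem_Iinf hM k
    refine ⟨ih, fun D hD hDM => hM.2.2 k ⟨ih, hM.2.1, ?_⟩⟩
    obtain ⟨e⟩ := hM.2.1.nonempty_iso_of_summand hD.2.1.1 hDM
    exact hD.2.2.of_iso e

theorem mem_relRad_of_inAdd_Ipart_succ [IsArtinianRing A] {C : Set (ModuleCat.{0} A)}
    (hC : ∀ Y ∈ C, Module.Finite A Y) {j : ℕ} {Z Z' : ModuleCat.{0} A}
    (hZ : InAdd (Ipart C (j + 1)) Z) (hZ' : InAdd (Ipart C j) Z') (f : Z ⟶ Z') :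
    f ∈ relRad C Z Z' := by
  intro X hXa hXi g h hiso
  have := hXa.finite hC
  have : IsNoetherian A X := ((IsArtinianRing.tfae A X).out 0 1).mp ‹_›
  obtain ⟨W, hW, hXW⟩ := hXi.exists_summand_of_inAdd hZ (.of_isIso_comp g (f ≫ h) hiso)
  obtain ⟨D, hD, hXD⟩ := hXi.exists_summand_of_inAdd hZ'
    (.of_isIso_comp (g ≫ f) h (by rwa [Category.assoc]))
  obtain ⟨e⟩ := hD.2.1.nonempty_iso_of_summand hXi.1 hXD
  exact hW.1.2 D hD ((Summand.of_iso e.symm).trans hXW)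

theorem InAdd.exists_mono_of_isCocover {D S : Set (ModuleCat.{0} A)} (hcov : IsCocover D S)
    {Z : ModuleCat.{0} A} (hZ : InAdd S Z) :
    ∃ Z' : ModuleCat.{0} A, InAdd D Z' ∧ ∃ f : Z ⟶ Z', Mono f := by
  induction hZ with
  | base hW => exact hcov _ hW
  | prod _ _ ih₁ ih₂ =>
    obtain ⟨Z₁, hZ₁, f₁, hf₁⟩ := ih₁
    obtain ⟨Z₂, hZ₂, f₂, hf₂⟩ := ih₂
    refine ⟨_, hZ₁.prod hZ₂, ModuleCat.ofHom (f₁.hom.prodMap f₂.hom), ?_⟩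
    rw [ModuleCat.mono_iff_injective] at hf₁ hf₂ ⊢
    exact hf₁.prodMap hf₂
  | summand _ hsum ih =>
    obtain ⟨Z', hZ', f, hf⟩ := ih
    obtain ⟨i, r, hir⟩ := hsum
    have := (SplitMono.mk r hir).mono
    exact ⟨Z', hZ', i ≫ f, mono_comp i f⟩

theorem InAdd.exists_comp_ne_zero {S : Set (ModuleCat.{0} A)} {M Z : ModuleCat.{0} A}
    (hZ : InAdd S Z) (c : M ⟶ Z) (hc : c ≠ 0) : ∃ T ∈ S, ∃ p : Z ⟶ T, c ≫ p ≠ 0 := by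
  induction hZ with
  | base hT => exact ⟨_, hT, 𝟙 _, by rwa [Category.comp_id]⟩
  | @prod Z₁ Z₂ _ _ ih₁ ih₂ =>
    by_cases h : c ≫ ModuleCat.ofHom (LinearMap.fst A Z₁ Z₂) = 0
    · have hs : c ≫ ModuleCat.ofHom (LinearMap.snd A Z₁ Z₂) ≠ 0 := fun h' => hc <| by
        ext x
        · exact ConcreteCategory.congr_hom h x
        · exact ConcreteCategory.congr_hom h' x
      obtain ⟨T, hT, p, hp⟩ := ih₂ _ hs
      exact ⟨T, hT, _ ≫ p, by rwa [← Category.assoc]⟩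
    · obtain ⟨T, hT, p, hp⟩ := ih₁ _ h
      exact ⟨T, hT, _ ≫ p, by rwa [← Category.assoc]⟩
  | summand _ hsum ih =>
    obtain ⟨i, r, hir⟩ := hsum
    obtain ⟨T, hT, p, hp⟩ := ih (c ≫ i) fun h => hc <| by
      rw [← Category.comp_id c, ← hir, ← Category.assoc, h, Limits.zero_comp]
    exact ⟨T, hT, i ≫ p, by rwa [← Category.assoc]⟩

theorem exists_mono_mem_radPow [IsArtinianRing A] {C : Set (ModuleCat.{0} A)}
    (hC : ∀ Y ∈ C, Module.Finite A Y) (hcov : ∀ k, IsCocover (Ipart C k) (iRest C k))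
    {M : ModuleCat.{0} A} (hM : ∀ k, M ∈ iRest C k) :
    ∀ t j : ℕ, ∃ Z, InAdd (Ipart C j) Z ∧ ∃ f : M ⟶ Z, Mono f ∧ f ∈ radPow C t M Z
  | 0, j => by
    obtain ⟨Z, hZ, f, hf⟩ := hcov j M (hM j)
    exact ⟨Z, hZ, f, hf, AddSubgroup.mem_top _⟩
  | t + 1, j => by
    obtain ⟨Z, hZ, f, hf, hft⟩ := exists_mono_mem_radPow hC hcov hM t (j + 1)
    obtain ⟨Z', hZ', g, hg⟩ := hZ.exists_mono_of_isCocover fun X hX => hcov j X hX.1.1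
    exact ⟨Z', hZ', f ≫ g, mono_comp f g,
      comp_mem_radPow_succ hft (mem_relRad_of_inAdd_Ipart_succ hC hZ hZ' g)⟩

theorem exists_radInf_eq_radPow (R : Type) [CommRing R] [IsArtinianRing R] [Algebra R A]
    [Module.Finite R A] (C : Set (ModuleCat.{0} A)) (M N : ModuleCat.{0} A)
    [Module.Finite A M] [Module.Finite A N] :
    ∃ m₀, ∀ m ≥ m₀, radInf C M N = radPow C m M N := by
  let : Module R N := Module.compHom N (algebraMap R A)
  have : IsScalarTower R A N := ⟨fun r a x => by
    rw [Algebra.smul_def]; exact mul_smul (algebraMap R A r) a x⟩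
  have : Module.Finite R N := .trans A N
  have := isArtinian_linearMap_of_finite R (S := A) (M := M) (N := N)
  -- `Hom(M, N)` has finite length over `R`, and each `rad^m(M, N)` is an `R`-submodule of it.
  let rad : ℕ →o (Submodule R (M →ₗ[A] N))ᵒᵈ :=
    { toFun m :=
        { carrier := {g | ModuleCat.ofHom g ∈ radPow C m M N}
          add_mem' := (radPow C m M N).add_mem
          zero_mem' := (radPow C m M N).zero_mem
          smul_mem' r _ hg := comp_mem_radPow hg (ModuleCat.ofHom (DistribSMul.toLinearMap A N r)) }
      monotone' _ _ h _ hg := radPow_antitone C M N h hg }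
  obtain ⟨m₁, hm₁⟩ := IsArtinian.monotone_stabilizes rad
  have hstable : ∀ m ≥ m₁, radPow C m M N = radPow C m₁ M N := fun m hm => by
    ext f
    exact (SetLike.ext_iff.mp (congrArg OrderDual.ofDual (hm₁ m hm)) f.hom).symm
  refine ⟨m₁ + 1, fun m hm => le_antisymm ?_ (le_iInf fun k => ?_)⟩
  · obtain ⟨k, rfl⟩ := Nat.exists_eq_add_of_lt hm
    exact (iInf_le _ (m₁ + k)).trans_eq (by rw [add_assoc])
  · rw [hstable m (by omega)]
    rcases le_total (k + 1) m₁ with hk | hk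
    · exact radPow_antitone C M N hk
    · exact (hstable (k + 1) hk).ge

theorem stmt8_general {R : Type} [CommRing R] [IsArtinianRing R] {A : Type} [Ring A]
    [Algebra R A] [Module.Finite R A] {n : ℕ} (Δ T : Fin n → ModuleCat.{0} A)
    (hT : ∀ i, T i ∈ Ipart (FDelta Δ) 0)
    (hI0 : ∀ X ∈ Ipart (FDelta Δ) 0, ∃ i, Nonempty (X ≅ T i))
    (hcocovers : ∀ k : ℕ, IsCocover (Ipart (FDelta Δ) k) (iRest (FDelta Δ) k))
    (M : ModuleCat.{0} A) (hM : M ∈ Iinf (FDelta Δ)) :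
    ∃ T' ∈ Ipart (FDelta Δ) 0, ∃ f : M ⟶ T', f ∈ radInf (FDelta Δ) M T' ∧ f ≠ 0 := by
  have := IsArtinianRing.of_finite R A
  have hfin : ∀ Y ∈ FDelta Δ, Module.Finite A Y := fun Y hY => hY.1
  have := hM.1.1
  choose m hm using fun i =>
    have := (hT i).1.1
    exists_radInf_eq_radPow R (FDelta Δ) M (T i)
  obtain ⟨Z, hZ, f, hf, hfrad⟩ :=
    exists_mono_mem_radPow hfin hcocovers (mem_iRest_of_mem_Iinf hM) (Finset.univ.sup m) 0
  have hf0 : f ≠ 0 := fun h => hM.2.1.1 <| ModuleCat.isZero_iff_subsingleton.mp <|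
    have : Mono (0 : M ⟶ Z) := h ▸ hf
    Limits.IsZero.of_mono_zero M Z
  obtain ⟨T', hT', p, hp⟩ := hZ.exists_comp_ne_zero f hf0
  obtain ⟨i, ⟨e⟩⟩ := hI0 T' hT'
  refine ⟨T i, hT i, f ≫ p ≫ e.hom, ?_, fun h => hp ?_⟩
  · rw [hm i _ (Finset.le_sup (Finset.mem_univ i))]
    exact comp_mem_radPow hfrad _
  · rw [← cancel_mono e.hom, Category.assoc, h, Limits.zero_comp]

/-- if M is indecomposable in I_∞(Δ), then there is a characteristic module
T ∈ I₀(Δ) with rad_Δ^∞(M,T) ≠ 0. -/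
theorem stmt8 {R : Type} [CommRing R] [IsArtinianRing R] {A : Type} [Ring A]
    [Algebra R A] [Module.Finite R A] {n : ℕ} (Δ T : Fin n → ModuleCat.{0} A)
    (hT : ∀ i, T i ∈ Ipart (FDelta Δ) 0)
    (hI0 : ∀ X ∈ Ipart (FDelta Δ) 0, ∃ i, Nonempty (X ≅ T i))
    (hcocovers : ∀ k : ℕ, IsCocover (Ipart (FDelta Δ) k) (iRest (FDelta Δ) k))
    (M : ModuleCat.{0} A) (hM : M ∈ Iinf (FDelta Δ)) (hind : Indec M) :
    ∃ T' ∈ Ipart (FDelta Δ) 0, ∃ f : M ⟶ T', f ∈ radInf (FDelta Δ) M T' ∧ f ≠ 0 :=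
  stmt8_general (R := R) Δ T hT hI0 hcocovers M hM
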